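/- arXiv:1710.02057 — 2 statements merged into one kernel-verified Lean document; each statement's English description precedes it below -/
import Mathlib

section
/- For every permutation σ of the set {1,…,n}, the inequality ℓ(σ) + c(σ) ≥ n holds, where ℓ(σ) is the number of inversions of σ and c(σ) is the number of orbits of σ. Moreover, equality ℓ(σ) + c(σ) = n holds if and only if σ is a product of pairwise distinct simple transpositions. -/
/-- The number of inversions (the length) of a permutation of `{1,…,n}`. -/
def invCount {n : ℕ} (σ : Equiv.Perm (Fin n)) : ℕ :=
  (Finset.univ.filter fun p : Fin n × Fin n => p.1 < p.2 ∧ σ p.2 < σ p.1).card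

/-- The number of orbits of `{1,…,n}` under the cyclic group generated by `σ`. -/
noncomputable def orbitCount {n : ℕ} (σ : Equiv.Perm (Fin n)) : ℕ :=
  Nat.card (MulAction.orbitRel.Quotient (Subgroup.zpowers σ) (Fin n))

/-- A simple transposition: a swap of two consecutive integers `i` and `i+1`. -/
def IsSimpleTransposition {n : ℕ} (τ : Equiv.Perm (Fin n)) : Prop :=
  ∃ (i : ℕ) (h : i + 1 < n), τ = Equiv.swap ⟨i, Nat.lt_of_succ_lt h⟩ ⟨i + 1, h⟩

/-- `σ` is the product of a (possibly empty) list of pairwise distinct simple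
transpositions. -/
def IsProdOfDistinctSimpleTranspositions {n : ℕ} (σ : Equiv.Perm (Fin n)) : Prop :=
  ∃ l : List (Equiv.Perm (Fin n)),
    l.Nodup ∧ (∀ τ ∈ l, IsSimpleTransposition τ) ∧ σ = l.prod

/-!
Peeling off descents writes `σ` as a word of `ℓ(σ)` simple transpositions `s_j = (j j+1)`.
A word without the letter `s_{k-1}` preserves `{x | x < k}`, so every cycle of its product lies
in an interval whose consecutive points are joined by letters of the word. Hence the points that
are not the least of their cycle inject, by `x ↦ s_{x-1}`, into the set of distinct letters:
`n - c(σ) ≤ #letters ≤ ℓ(σ)`, and equality forces the letters to be distinct. Conversely, in a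
word of distinct letters, `j` and `j+1` lie in different cycles of the remaining letters, so
the letter `s_j` merges them into one cycle; then `n - c(σ)` is the number of letters, which is
at least `ℓ(σ)`.
-/

open Equiv Equiv.Perm Finset

theorem Setoid.card_quotient_add_card_filter_exists_lt {α : Type*} [Fintype α] [LinearOrder α]
    (r : Setoid α) [DecidableRel r] :
    Nat.card (Quotient r) + #{x | ∃ y < x, r x y} = Fintype.card α := by
  classical
  set mins : Finset α := {x | ∀ y, r x y → x ≤ y}
  have hmins : Nat.card (Quotient r) = #mins := by
    rw [Nat.card_eq_fintype_card, ← Finset.card_univ]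
    have himage : mins.image (Quotient.mk r) = univ := by
      refine eq_univ_of_forall fun q => ?_
      induction q using Quotient.inductionOn with | h x => ?_
      set cls : Finset α := {y | r x y}
      have hcls : cls.Nonempty := ⟨x, by simp [cls]⟩
      have hmem := cls.min'_mem hcls
      simp only [cls, mem_filter, mem_univ, true_and] at hmem
      refine mem_image.2 ⟨cls.min' hcls, ?_, Quotient.sound (r.symm hmem)⟩
      simp only [mins, mem_filter, mem_univ, true_and]
      exact fun y hy => cls.min'_le y (by simp [cls, r.trans hmem hy])
    rw [← himage, card_image_of_injOn]
    intro x hx y hy hxy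
    simp only [mins, coe_filter, mem_univ, true_and, Set.mem_ofPred_eq] at hx hy
    have hr : r x y := Quotient.exact hxy
    exact le_antisymm (hx y hr) (hy x (r.symm hr))
  rw [hmins, ← card_univ,
    ← card_filter_add_card_filter_not (s := univ) (fun x => ∀ y, r x y → x ≤ y)]
  simp only [mins, not_forall, not_le, exists_prop, and_comm]

theorem Equiv.Perm.orbitRel_zpowers {α : Type*} (σ : Perm α) :
    MulAction.orbitRel (Subgroup.zpowers σ) α = SameCycle.setoid σ := by
  ext x y
  rw [MulAction.orbitRel_apply, MulAction.mem_orbit_iff]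
  constructor
  · rintro ⟨⟨_, i, rfl⟩, h⟩
    exact SameCycle.symm ⟨i, h⟩
  · rintro ⟨i, h⟩
    exact ⟨⟨σ ^ (-i), -i, rfl⟩, by simp [← h]⟩

theorem orbitCount_add_card_filter_exists_lt {n : ℕ} (σ : Perm (Fin n)) :
    orbitCount σ + #{x | ∃ y < x, σ.SameCycle x y} = n := by
  rw [orbitCount, MulAction.orbitRel.Quotient, Equiv.Perm.orbitRel_zpowers]
  classical
  convert Setoid.card_quotient_add_card_filter_exists_lt (SameCycle.setoid σ) using 2
  · congr 1
    ext
    simp only [mem_filter]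
    rfl
  · exact (Fintype.card_fin n).symm

theorem List.nodup_of_length_le_card_toFinset {α : Type*} [DecidableEq α] {l : List α}
    (h : l.length ≤ #l.toFinset) : l.Nodup :=
  Multiset.coe_nodup.1 <| Multiset.toFinset_card_eq_card_iff_nodup.1 <|
    (List.toFinset_card_le l).antisymm h

namespace Equiv.Perm

variable {α : Type*} {π : Perm α} {x y : α}

theorem SameCycle.mem_of_mapsTo [Finite α] {s : Set α} (hs : Set.MapsTo π s s)
    (h : π.SameCycle x y) (hx : x ∈ s) : y ∈ s := by
  obtain ⟨i, -, rfl⟩ := h.exists_pow_eq'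
  exact hs.perm_pow i hx

variable [Finite α] [DecidableEq α] {a b : α}

theorem sameCycle_swap_mul_of_not_sameCycle (hab : ¬π.SameCycle a b) :
    (swap a b * π).SameCycle b a := by
  by_contra hba
  set τ := swap a b * π
  -- The `π`-cycle of `b` would stay inside the `τ`-cycle of `b`, but `τ (π⁻¹ b) = a`.
  have hτ : ∀ z, π z ≠ a → π z ≠ b → τ z = π z := fun z ha hb => swap_apply_of_ne_of_ne ha hb
  have hmaps : Set.MapsTo π {z | τ.SameCycle b z ∧ π.SameCycle b z}
      {z | τ.SameCycle b z ∧ π.SameCycle b z} := by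
    rintro z ⟨hτz, hπz⟩
    have hπz' : π.SameCycle b (π z) := sameCycle_apply_right.2 hπz
    have ha : π z ≠ a := fun e => hab (e ▸ hπz').symm
    by_cases hb : π z = b
    · exact absurd (hτz.trans ⟨1, by simp [τ, hb]⟩) hba
    · exact ⟨hτ z ha hb ▸ sameCycle_apply_right.2 hτz, hπz'⟩
  have hpre : π.SameCycle b (π.symm b) := sameCycle_symm_apply_right.2 (SameCycle.refl _ _)
  obtain ⟨hτpre, -⟩ := hpre.mem_of_mapsTo hmaps ⟨SameCycle.refl _ _, SameCycle.refl _ _⟩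
  exact hba (hτpre.trans ⟨1, by simp [τ]⟩)

theorem sameCycle_swap_mul_swap_apply (hab : ¬π.SameCycle a b) (z : α) :
    (swap a b * π).SameCycle z (swap a b z) := by
  rcases eq_or_ne z a with rfl | hza
  · simpa using (sameCycle_swap_mul_of_not_sameCycle hab).symm
  rcases eq_or_ne z b with rfl | hzb
  · simpa using sameCycle_swap_mul_of_not_sameCycle hab
  · rw [swap_apply_of_ne_of_ne hza hzb]

theorem SameCycle.swap_mul_of_not_sameCycle (hab : ¬π.SameCycle a b) (h : π.SameCycle x y) :
    (swap a b * π).SameCycle x y := by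
  refine h.mem_of_mapsTo (s := {z | (swap a b * π).SameCycle x z}) (fun z hz => ?_) (.refl _ _)
  have hπz : π z = swap a b ((swap a b * π) z) := by simp
  rw [hπz]
  exact (sameCycle_apply_right.2 hz).trans (sameCycle_swap_mul_swap_apply hab _)

end Equiv.Perm

section SimpleTranspositions

variable {n : ℕ}

def simpleSwap (n j : ℕ) : Perm (Fin n) :=
  if h : j + 1 < n then swap ⟨j, Nat.lt_of_succ_lt h⟩ ⟨j + 1, h⟩ else 1

theorem simpleSwap_eq_swap {j : ℕ} (h : j + 1 < n) :
    simpleSwap n j = swap ⟨j, Nat.lt_of_succ_lt h⟩ ⟨j + 1, h⟩ :=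
  dif_pos h

theorem isSimpleTransposition_iff {τ : Perm (Fin n)} :
    IsSimpleTransposition τ ↔ ∃ j, j + 1 < n ∧ τ = simpleSwap n j := by
  refine exists_congr fun j => ⟨fun ⟨h, hτ⟩ => ⟨h, by rw [hτ, simpleSwap, dif_pos h]⟩, ?_⟩
  rintro ⟨h, rfl⟩
  exact ⟨h, dif_pos h⟩

theorem simpleSwap_apply_val {j : ℕ} (h : j + 1 < n) (x : Fin n) :
    (simpleSwap n j x : ℕ) = if (x : ℕ) = j then j + 1 else if (x : ℕ) = j + 1 then j else x := by
  rw [simpleSwap, dif_pos h, swap_apply_def]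
  split_ifs <;> simp_all [Fin.ext_iff]

theorem simpleSwap_inj {j j' : ℕ} (h : j + 1 < n) (h' : j' + 1 < n) :
    simpleSwap n j = simpleSwap n j' ↔ j = j' := by
  refine ⟨fun hjj' => ?_, congrArg _⟩
  have := congrArg (fun τ : Perm (Fin n) => (τ ⟨j, Nat.lt_of_succ_lt h⟩ : ℕ)) hjj'
  simp only [simpleSwap_apply_val h, simpleSwap_apply_val h'] at this
  split_ifs at this <;> omega

theorem simpleSwap_mul_self (j : ℕ) : simpleSwap n j * simpleSwap n j = 1 := by
  unfold simpleSwap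
  split_ifs <;> simp

theorem simpleSwap_lt_simpleSwap_iff {j : ℕ} (h : j + 1 < n) {x y : Fin n} :
    simpleSwap n j x < simpleSwap n j y ↔
      (x < y ∧ ¬((x : ℕ) = j ∧ (y : ℕ) = j + 1)) ∨ ((x : ℕ) = j + 1 ∧ (y : ℕ) = j) := by
  rw [Fin.lt_def, Fin.lt_def, simpleSwap_apply_val h, simpleSwap_apply_val h]
  split_ifs <;> omega

theorem invCount_mul_simpleSwap_of_lt {σ : Perm (Fin n)} {j : ℕ} (h : j + 1 < n)
    (hasc : σ ⟨j, Nat.lt_of_succ_lt h⟩ < σ ⟨j + 1, h⟩) :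
    invCount (σ * simpleSwap n j) = invCount σ + 1 := by
  set s := simpleSwap n j
  have hs : ∀ x, s (s x) = x := fun x => by rw [← Perm.mul_apply, simpleSwap_mul_self, one_apply]
  have hreindex : invCount (σ * s) = #{p : Fin n × Fin n | s p.1 < s p.2 ∧ σ p.2 < σ p.1} := by
    refine card_equiv (Equiv.prodCongr s s) fun p => ?_
    simp only [mem_filter, mem_univ, true_and]
    simp [hs]
  -- `s` preserves the order of every pair except `{j, j + 1}`
  set p₀ : Fin n × Fin n := (⟨j + 1, h⟩, ⟨j, Nat.lt_of_succ_lt h⟩)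
  have hinsert : ({p | s p.1 < s p.2 ∧ σ p.2 < σ p.1} : Finset (Fin n × Fin n)) =
      insert p₀ ({p | p.1 < p.2 ∧ σ p.2 < σ p.1} : Finset (Fin n × Fin n)) := by
    ext ⟨x, y⟩
    simp only [mem_filter, mem_univ, true_and, mem_insert, s, simpleSwap_lt_simpleSwap_iff h, p₀,
      Prod.mk.injEq, Fin.ext_iff]
    constructor
    · rintro ⟨hlt | ⟨hx, hy⟩, hinv⟩
      · exact Or.inr ⟨hlt.1, hinv⟩
      · exact Or.inl ⟨hx, hy⟩
    · rintro (⟨hx, hy⟩ | ⟨hlt, hinv⟩)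
      · obtain rfl : x = ⟨j + 1, h⟩ := Fin.ext hx
        obtain rfl : y = ⟨j, Nat.lt_of_succ_lt h⟩ := Fin.ext hy
        exact ⟨Or.inr ⟨rfl, rfl⟩, hasc⟩
      · refine ⟨Or.inl ⟨hlt, ?_⟩, hinv⟩
        rintro ⟨hx, hy⟩
        obtain rfl : x = ⟨j, Nat.lt_of_succ_lt h⟩ := Fin.ext hx
        obtain rfl : y = ⟨j + 1, h⟩ := Fin.ext hy
        exact lt_asymm hinv hasc
  have hp₀ : p₀ ∉ ({p | p.1 < p.2 ∧ σ p.2 < σ p.1} : Finset (Fin n × Fin n)) := by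
    simp [p₀]
  rw [hreindex, hinsert, card_insert_of_notMem hp₀, invCount]

theorem invCount_mul_simpleSwap_of_gt {σ : Perm (Fin n)} {j : ℕ} (h : j + 1 < n)
    (hdesc : σ ⟨j + 1, h⟩ < σ ⟨j, Nat.lt_of_succ_lt h⟩) :
    invCount (σ * simpleSwap n j) + 1 = invCount σ := by
  have hasc : (σ * simpleSwap n j) ⟨j, Nat.lt_of_succ_lt h⟩ < (σ * simpleSwap n j) ⟨j + 1, h⟩ := by
    simpa [simpleSwap, dif_pos h] using hdesc
  rw [← invCount_mul_simpleSwap_of_lt h hasc, mul_assoc, simpleSwap_mul_self, mul_one]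

theorem invCount_mul_simpleSwap_le (σ : Perm (Fin n)) (j : ℕ) :
    invCount (σ * simpleSwap n j) ≤ invCount σ + 1 := by
  by_cases h : j + 1 < n
  · rcases lt_or_gt_of_ne (σ.injective.ne (a₁ := ⟨j, Nat.lt_of_succ_lt h⟩) (a₂ := ⟨j + 1, h⟩)
      (by simp)) with hasc | hdesc
    · exact (invCount_mul_simpleSwap_of_lt h hasc).le
    · linarith [invCount_mul_simpleSwap_of_gt h hdesc]
  · simp [simpleSwap, dif_neg h]

theorem invCount_one : invCount (1 : Perm (Fin n)) = 0 :=
  card_eq_zero.2 <| filter_eq_empty_iff.2 fun _ _ h => lt_asymm h.1 h.2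

theorem invCount_prod_le {l : List (Perm (Fin n))} (hl : ∀ τ ∈ l, IsSimpleTransposition τ) :
    invCount l.prod ≤ l.length := by
  induction l using List.reverseRecOn with
  | nil => simp [invCount_one]
  | append_singleton t τ ih =>
    obtain ⟨j, -, rfl⟩ := isSimpleTransposition_iff.1 (hl τ (by simp))
    rw [List.prod_append, List.prod_singleton, List.length_append, List.length_singleton]
    exact (invCount_mul_simpleSwap_le _ j).trans
      (Nat.add_le_add_right (ih fun τ hτ => hl τ (by simp [hτ])) 1)

theorem exists_descent_of_ne_one {σ : Perm (Fin n)} (hσ : σ ≠ 1) :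
    ∃ j, ∃ h : j + 1 < n, σ ⟨j + 1, h⟩ < σ ⟨j, Nat.lt_of_succ_lt h⟩ := by
  contrapose! hσ
  cases n with
  | zero => exact Subsingleton.elim _ _
  | succ m =>
    have hmono : StrictMono σ := Fin.strictMono_iff_lt_succ.2 fun i =>
      (hσ i i.succ.isLt).lt_of_ne (σ.injective.ne (by simp [Fin.ext_iff]))
    exact Equiv.ext fun x => hmono.apply_eq

theorem exists_word_length_eq_invCount (σ : Perm (Fin n)) :
    ∃ l : List (Perm (Fin n)),
      (∀ τ ∈ l, IsSimpleTransposition τ) ∧ l.prod = σ ∧ l.length = invCount σ := by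
  induction hk : invCount σ using Nat.strong_induction_on generalizing σ with
  | _ k ih =>
    by_cases hσ : σ = 1
    · subst hσ
      exact ⟨[], by simp, rfl, by simp [← hk, invCount_one]⟩
    obtain ⟨j, h, hdesc⟩ := exists_descent_of_ne_one hσ
    have hdrop := invCount_mul_simpleSwap_of_gt h hdesc
    obtain ⟨l, hl, hprod, hlen⟩ := ih _ (by omega) (σ * simpleSwap n j) rfl
    refine ⟨l ++ [simpleSwap n j], ?_, ?_, ?_⟩
    · simp only [List.mem_append, List.mem_singleton]
      rintro τ (hτ | rfl)
      exacts [hl τ hτ, isSimpleTransposition_iff.2 ⟨j, h, rfl⟩]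
    · rw [List.prod_append, List.prod_singleton, hprod, mul_assoc, simpleSwap_mul_self, mul_one]
    · rw [List.length_append, List.length_singleton, hlen]
      omega

theorem simpleSwap_apply_val_lt_iff {j k : ℕ} (h : j + 1 < n) (hjk : j + 1 ≠ k) (x : Fin n) :
    (simpleSwap n j x : ℕ) < k ↔ (x : ℕ) < k := by
  rw [simpleSwap_apply_val h]
  split_ifs <;> omega

section Words

variable {l : List (Perm (Fin n))} (hl : ∀ τ ∈ l, IsSimpleTransposition τ)
include hl

theorem prod_apply_val_lt_iff {k : ℕ} (hk : simpleSwap n (k - 1) ∉ l) (x : Fin n) :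
    (l.prod x : ℕ) < k ↔ (x : ℕ) < k := by
  induction l with
  | nil => simp
  | cons τ t ih =>
    obtain ⟨j, h, rfl⟩ := isSimpleTransposition_iff.1 (hl τ (by simp))
    have hjk : j + 1 ≠ k := by rintro rfl; exact hk (by simp)
    rw [List.prod_cons, mul_apply, simpleSwap_apply_val_lt_iff h hjk,
      ih (fun τ hτ => hl τ (by simp [hτ])) (fun hmem => hk (by simp [hmem]))]

theorem not_sameCycle_prod_of_simpleSwap_notMem {k : ℕ} (hk : simpleSwap n (k - 1) ∉ l)
    {x y : Fin n} (hx : (x : ℕ) < k) (hy : k ≤ (y : ℕ)) : ¬l.prod.SameCycle x y := fun hxy =>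
  (hxy.mem_of_mapsTo (s := {z : Fin n | (z : ℕ) < k})
    (fun z hz => (prod_apply_val_lt_iff hl hk z).2 hz) hx).not_ge hy

theorem sameCycle_prod_apply_of_mem (hnd : l.Nodup) {τ : Perm (Fin n)} (hτ : τ ∈ l)
    (x : Fin n) : l.prod.SameCycle x (τ x) := by
  induction l with
  | nil => simp at hτ
  | cons σ t ih =>
    obtain ⟨j, h, rfl⟩ := isSimpleTransposition_iff.1 (hl σ (by simp))
    rw [List.nodup_cons] at hnd
    have htl : ∀ τ ∈ t, IsSimpleTransposition τ := fun τ hτ => hl τ (by simp [hτ])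
    have hsplit : ¬t.prod.SameCycle ⟨j, Nat.lt_of_succ_lt h⟩ ⟨j + 1, h⟩ :=
      not_sameCycle_prod_of_simpleSwap_notMem (k := j + 1) htl hnd.1 (by simp) (by simp)
    rw [List.prod_cons, simpleSwap_eq_swap h]
    rcases List.mem_cons.1 hτ with rfl | hτt
    · rw [simpleSwap_eq_swap h]
      exact sameCycle_swap_mul_swap_apply hsplit x
    · exact (ih htl hnd.2 hτt).swap_mul_of_not_sameCycle hsplit

theorem card_filter_exists_lt_sameCycle_prod_le :
    #{x | ∃ y < x, l.prod.SameCycle x y} ≤ #l.toFinset := by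
  refine card_le_card_of_injOn (fun x : Fin n => simpleSwap n (x - 1)) ?_ ?_
  · rintro x hx
    simp only [mem_coe, mem_filter, mem_univ, true_and] at hx
    obtain ⟨y, hyx, hxy⟩ := hx
    simp only [mem_coe, List.mem_toFinset]
    by_contra hk
    exact not_sameCycle_prod_of_simpleSwap_notMem hl hk hyx le_rfl hxy.symm
  · rintro x hx x' hx' hxx'
    simp only [mem_coe, mem_filter, mem_univ, true_and] at hx hx'
    obtain ⟨y, hyx, -⟩ := hx
    obtain ⟨y', hyx', -⟩ := hx'
    rw [Fin.lt_def] at hyx hyx'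
    have := (simpleSwap_inj (by omega) (by omega)).1 hxx'
    exact Fin.ext (by omega)

theorem card_toFinset_le_card_filter_exists_lt_sameCycle_prod (hnd : l.Nodup) :
    #l.toFinset ≤ #{x | ∃ y < x, l.prod.SameCycle x y} := by
  refine card_le_card_of_surjOn (fun x : Fin n => simpleSwap n (x - 1)) fun τ hτ => ?_
  rw [mem_coe, List.mem_toFinset] at hτ
  obtain ⟨j, h, rfl⟩ := isSimpleTransposition_iff.1 (hl _ hτ)
  refine ⟨⟨j + 1, h⟩, ?_, by simp⟩
  simp only [mem_coe, mem_filter, mem_univ, true_and]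
  refine ⟨⟨j, Nat.lt_of_succ_lt h⟩, by simp [Fin.lt_def], ?_⟩
  simpa [simpleSwap_eq_swap h] using sameCycle_prod_apply_of_mem hl hnd hτ ⟨j + 1, h⟩

end Words

end SimpleTranspositions

/-- For every permutation σ of {1,…,n}, ℓ(σ) + c(σ) ≥ n, with equality if and only
if σ is a product of pairwise distinct simple transpositions. -/
theorem length_add_orbitCount_ge (n : ℕ) (σ : Equiv.Perm (Fin n)) :
    n ≤ invCount σ + orbitCount σ ∧
      (invCount σ + orbitCount σ = n ↔ IsProdOfDistinctSimpleTranspositions σ) := by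
  have hcount := orbitCount_add_card_filter_exists_lt σ
  obtain ⟨l, hl, hprod, hlen⟩ := exists_word_length_eq_invCount σ
  have hletters : #{x | ∃ y < x, σ.SameCycle x y} ≤ #l.toFinset :=
    hprod ▸ card_filter_exists_lt_sameCycle_prod_le hl
  have hdedup := l.toFinset_card_le
  refine ⟨by omega, fun heq => ⟨l, ?_, hl, hprod.symm⟩, ?_⟩
  · exact List.nodup_of_length_le_card_toFinset (by omega)
  · rintro ⟨l', hnd, hl', rfl⟩
    have hletters' := card_toFinset_le_card_filter_exists_lt_sameCycle_prod hl' hnd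
    rw [List.toFinset_card_of_nodup hnd] at hletters'
    have hinv := invCount_prod_le hl'
    omega
end

section
/- For every n ≥ 1, the number of permutations σ of {1,…,n} which are products of pairwise distinct simple transpositions equals F_{2n}, where (F_m) is the Fibonacci sequence normalized so that F_1 = 0 and F_2 = 1 (equivalently, with Mathlib's convention fib(0) = 0, fib(1) = 1, this number equals fib(2n−1)). -/
/-!
Write `s₀ = swap 0 1`. A product of distinct simple transpositions of `Fin (n + 2)` in which `s₀`
does not occur is the lift (fixing `0`) of such a product on `Fin (n + 1)`. If `s₀` occurs, it
occurs once, and it commutes with every other factor except possibly `s₁`; moving it to the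
front, or to the back when `s₁` precedes it, writes the permutation as `s₀ * τ̃` or as `τ̃ * s₀`
with `τ̃` a lift, where in the second case `τ` moves `0`. The three shapes are told apart by the
image of `0`. So if `A n` counts these permutations of `Fin (n + 1)` and `B n` those among them
moving `0`, then `A (n + 1) = A n + B (n + 1)` and `B (n + 1) = A n + B n`, the recursion of
`fib (2 * n + 1)` and `fib (2 * n)`.
-/

open Equiv

@[simp] lemma Fin.succ_eq_one_iff {n : ℕ} {a : Fin (n + 1)} : a.succ = 1 ↔ a = 0 := by
  rw [← Fin.succ_zero_eq_one, Fin.succ_inj]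

lemma Equiv.Perm.commute_swap_of_apply_eq {α : Type*} [DecidableEq α] {f : Perm α} {a b : α}
    (ha : f a = a) (hb : f b = b) : Commute (swap a b) f := by
  have := swap_apply_apply f a b
  rw [ha, hb, eq_mul_inv_iff_mul_eq] at this
  exact this

def liftPerm {n : ℕ} : Perm (Fin n) →* Perm (Fin (n + 1)) where
  toFun σ :=
    { toFun := Fin.cases 0 fun i => (σ i).succ
      invFun := Fin.cases 0 fun i => (σ⁻¹ i).succ
      left_inv := fun x => by cases x using Fin.cases <;> simp
      right_inv := fun x => by cases x using Fin.cases <;> simp }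
  map_one' := by ext x; cases x using Fin.cases <;> simp
  map_mul' σ τ := by ext x; cases x using Fin.cases <;> simp

section liftPerm

variable {n : ℕ}

@[simp] lemma liftPerm_apply_zero (σ : Perm (Fin n)) : liftPerm σ 0 = 0 := rfl

@[simp] lemma liftPerm_apply_succ (σ : Perm (Fin n)) (i : Fin n) :
    liftPerm σ i.succ = (σ i).succ := rfl

@[simp] lemma liftPerm_apply_one (σ : Perm (Fin (n + 1))) : liftPerm σ 1 = (σ 0).succ := rfl

lemma liftPerm_injective : Function.Injective (liftPerm (n := n)) := fun σ τ h =>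
  Equiv.ext fun i => Fin.succ_injective _ <| by simpa using congr($h i.succ)

lemma liftPerm_swap (a b : Fin n) : liftPerm (swap a b) = swap a.succ b.succ := by
  ext x
  cases x using Fin.cases with
  | zero => simp [swap_apply_of_ne_of_ne (Fin.succ_ne_zero a).symm (Fin.succ_ne_zero b).symm]
  | succ i => simp [(Fin.succ_injective _).swap_apply]

end liftPerm

section SimpleTransposition

variable {n : ℕ}

lemma isSimpleTransposition_swap_zero_one : IsSimpleTransposition (swap 0 1 : Perm (Fin (n + 2))) :=
  ⟨0, by omega, rfl⟩

lemma IsSimpleTransposition.exists_liftPerm_eq {τ : Perm (Fin (n + 1))}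
    (hτ : IsSimpleTransposition τ) (hne : τ ≠ swap 0 1) :
    ∃ τ', IsSimpleTransposition τ' ∧ liftPerm τ' = τ := by
  obtain ⟨_ | k, h, rfl⟩ := hτ
  · exact (hne (congrArg (swap 0) (Fin.ext (Nat.mod_eq_of_lt h).symm))).elim
  · exact ⟨_, ⟨k, by omega, rfl⟩, liftPerm_swap _ _⟩

lemma IsSimpleTransposition.liftPerm {τ : Perm (Fin n)} (hτ : IsSimpleTransposition τ) :
    IsSimpleTransposition (liftPerm τ) := by
  obtain ⟨i, h, rfl⟩ := hτ
  exact ⟨i + 1, by omega, liftPerm_swap _ _⟩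

lemma exists_map_liftPerm_eq {l : List (Perm (Fin (n + 1)))}
    (hl : ∀ τ ∈ l, IsSimpleTransposition τ) (h : swap 0 1 ∉ l) :
    ∃ m : List (Perm (Fin n)), (∀ τ ∈ m, IsSimpleTransposition τ) ∧ m.map liftPerm = l := by
  induction l with
  | nil => exact ⟨[], by simp, rfl⟩
  | cons τ l ih =>
    rw [List.mem_cons, not_or] at h
    obtain ⟨m, hm, rfl⟩ := ih (fun σ hσ => hl σ (List.mem_cons_of_mem τ hσ)) h.2
    obtain ⟨τ', hτ', rfl⟩ := (hl τ List.mem_cons_self).exists_liftPerm_eq (Ne.symm h.1)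
    exact ⟨τ' :: m, List.forall_mem_cons.mpr ⟨hτ', hm⟩, rfl⟩

lemma list_prod_apply_zero {l : List (Perm (Fin (n + 1)))}
    (hl : ∀ τ ∈ l, IsSimpleTransposition τ) (h : swap 0 1 ∉ l) : l.prod 0 = 0 := by
  obtain ⟨m, -, rfl⟩ := exists_map_liftPerm_eq hl h
  rw [← map_list_prod, liftPerm_apply_zero]

lemma swap_zero_one_notMem_map_liftPerm (m : List (Perm (Fin (n + 1)))) :
    (swap 0 1 : Perm (Fin (n + 2))) ∉ m.map liftPerm := by
  simp only [List.mem_map, not_exists, not_and]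
  intro τ _ h
  simpa using congr($h 0)

end SimpleTransposition

section Decomposition

variable {n : ℕ}

lemma commute_swap_zero_one_liftPerm {ρ : Perm (Fin (n + 1))} (h : ρ 0 = 0) :
    Commute (swap 0 1) (liftPerm ρ) :=
  Perm.commute_swap_of_apply_eq (liftPerm_apply_zero ρ) (by simpa using h)

lemma IsProdOfDistinctSimpleTranspositions.swap_mul_liftPerm {τ : Perm (Fin (n + 1))}
    (hτ : IsProdOfDistinctSimpleTranspositions τ) :
    IsProdOfDistinctSimpleTranspositions (swap 0 1 * liftPerm τ) := by
  obtain ⟨m, hnd, hs, rfl⟩ := hτ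
  refine ⟨swap 0 1 :: m.map liftPerm, ?_, ?_, by rw [List.prod_cons, map_list_prod]⟩
  · exact List.nodup_cons.2 ⟨swap_zero_one_notMem_map_liftPerm m, hnd.map liftPerm_injective⟩
  · simpa using ⟨isSimpleTransposition_swap_zero_one, fun τ hτ => (hs τ hτ).liftPerm⟩

lemma IsProdOfDistinctSimpleTranspositions.liftPerm_mul_swap {τ : Perm (Fin (n + 1))}
    (hτ : IsProdOfDistinctSimpleTranspositions τ) :
    IsProdOfDistinctSimpleTranspositions (liftPerm τ * swap 0 1) := by
  obtain ⟨m, hnd, hs, rfl⟩ := hτ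
  refine ⟨m.map liftPerm ++ [swap 0 1], ?_, ?_, by rw [List.prod_append, map_list_prod]; simp⟩
  · refine List.nodup_middle.2 <| List.nodup_cons.2 ⟨?_, by simpa using hnd.map liftPerm_injective⟩
    simpa using swap_zero_one_notMem_map_liftPerm m
  · refine List.forall_mem_append.2 ⟨?_, by simpa using isSimpleTransposition_swap_zero_one⟩
    simpa using fun τ hτ => (hs τ hτ).liftPerm

lemma liftPerm_mul_swap_mul_liftPerm_cases {m₁ m₂ : List (Perm (Fin (n + 1)))}
    (hnd : (m₁ ++ m₂).Nodup) (hs : ∀ τ ∈ m₁ ++ m₂, IsSimpleTransposition τ) :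
    (∃ τ, IsProdOfDistinctSimpleTranspositions τ ∧
      swap 0 1 * liftPerm τ = liftPerm m₁.prod * swap 0 1 * liftPerm m₂.prod) ∨
    (∃ τ, IsProdOfDistinctSimpleTranspositions τ ∧ τ 0 ≠ 0 ∧
      liftPerm τ * swap 0 1 = liftPerm m₁.prod * swap 0 1 * liftPerm m₂.prod) := by
  have hτ : IsProdOfDistinctSimpleTranspositions (m₁ ++ m₂).prod := ⟨_, hnd, hs, rfl⟩
  rw [List.forall_mem_append] at hs
  by_cases h₁ : m₁.prod 0 = 0
  · refine Or.inl ⟨_, hτ, ?_⟩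
    rw [List.prod_append, map_mul, ← mul_assoc, (commute_swap_zero_one_liftPerm h₁).eq]
  · have hmem : swap 0 1 ∈ m₁ := by_contra fun h => h₁ (list_prod_apply_zero hs.1 h)
    have h₂ : m₂.prod 0 = 0 := list_prod_apply_zero hs.2 (List.disjoint_of_nodup_append hnd hmem)
    refine Or.inr ⟨_, hτ, by simpa [List.prod_append, h₂] using h₁, ?_⟩
    rw [List.prod_append, map_mul, mul_assoc, mul_assoc, (commute_swap_zero_one_liftPerm h₂).eq]

lemma IsProdOfDistinctSimpleTranspositions.eq_liftPerm_or {σ : Perm (Fin (n + 2))}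
    (hσ : IsProdOfDistinctSimpleTranspositions σ) :
    (∃ τ, IsProdOfDistinctSimpleTranspositions τ ∧ liftPerm τ = σ) ∨
    (∃ τ, IsProdOfDistinctSimpleTranspositions τ ∧ swap 0 1 * liftPerm τ = σ) ∨
    (∃ τ, IsProdOfDistinctSimpleTranspositions τ ∧ τ 0 ≠ 0 ∧ liftPerm τ * swap 0 1 = σ) := by
  obtain ⟨l, hnd, hs, rfl⟩ := hσ
  by_cases h₀ : swap 0 1 ∈ l
  · obtain ⟨l₁, l₂, rfl⟩ := List.append_of_mem h₀
    obtain ⟨h₀, hnd⟩ := List.nodup_cons.1 (List.nodup_middle.1 hnd)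
    rw [List.mem_append, not_or] at h₀
    obtain ⟨m₁, hm₁, rfl⟩ := exists_map_liftPerm_eq (fun τ h => hs τ (by simp [h])) h₀.1
    obtain ⟨m₂, hm₂, rfl⟩ := exists_map_liftPerm_eq (fun τ h => hs τ (by simp [h])) h₀.2
    rw [← List.map_append] at hnd
    have hprod : (m₁.map liftPerm ++ swap 0 1 :: m₂.map liftPerm).prod =
        liftPerm m₁.prod * swap 0 1 * liftPerm m₂.prod := by
      simp [List.prod_append, map_list_prod, mul_assoc]
    rw [hprod]
    exact Or.inr <| liftPerm_mul_swap_mul_liftPerm_cases (hnd.of_map _)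
      (List.forall_mem_append.2 ⟨hm₁, hm₂⟩)
  · obtain ⟨m, hm, rfl⟩ := exists_map_liftPerm_eq hs h₀
    exact Or.inl ⟨_, ⟨m, hnd.of_map _, hm, rfl⟩, map_list_prod _ _⟩

lemma IsProdOfDistinctSimpleTranspositions.liftPerm {τ : Perm (Fin n)}
    (hτ : IsProdOfDistinctSimpleTranspositions τ) :
    IsProdOfDistinctSimpleTranspositions (liftPerm τ) := by
  obtain ⟨m, hnd, hs, rfl⟩ := hτ
  exact ⟨m.map _root_.liftPerm, hnd.map liftPerm_injective,
    by simpa using fun τ hτ => (hs τ hτ).liftPerm, map_list_prod _ _⟩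

end Decomposition

section Counting

variable (n : ℕ)

lemma setOf_apply_zero_eq_zero :
    {σ : Perm (Fin (n + 2)) | IsProdOfDistinctSimpleTranspositions σ ∧ σ 0 = 0} =
      liftPerm '' {τ | IsProdOfDistinctSimpleTranspositions τ} := by
  ext σ
  constructor
  · rintro ⟨hσ, h₀⟩
    rcases hσ.eq_liftPerm_or with ⟨τ, hτ, rfl⟩ | ⟨τ, -, rfl⟩ | ⟨τ, -, -, rfl⟩
    · exact ⟨τ, hτ, rfl⟩
    · simp at h₀
    · simp at h₀
  · rintro ⟨τ, hτ, rfl⟩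
    exact ⟨hτ.liftPerm, rfl⟩

lemma setOf_apply_zero_eq_one :
    {σ : Perm (Fin (n + 2)) | IsProdOfDistinctSimpleTranspositions σ ∧ σ 0 ≠ 0} ∩ {σ | σ 0 = 1} =
      (swap 0 1 * liftPerm ·) '' {τ | IsProdOfDistinctSimpleTranspositions τ} := by
  ext σ
  constructor
  · rintro ⟨⟨hσ, -⟩, h₁ : σ 0 = 1⟩
    rcases hσ.eq_liftPerm_or with ⟨τ, -, rfl⟩ | ⟨τ, hτ, rfl⟩ | ⟨τ, -, hτ₀, rfl⟩
    · simp at h₁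
    · exact ⟨τ, hτ, rfl⟩
    · simp [hτ₀] at h₁
  · rintro ⟨τ, hτ, rfl⟩
    exact ⟨⟨hτ.swap_mul_liftPerm, by simp⟩, by simp⟩

lemma setOf_apply_zero_ne_zero_ne_one :
    {σ : Perm (Fin (n + 2)) | IsProdOfDistinctSimpleTranspositions σ ∧ σ 0 ≠ 0} \ {σ | σ 0 = 1} =
      (liftPerm · * swap 0 1) '' {τ | IsProdOfDistinctSimpleTranspositions τ ∧ τ 0 ≠ 0} := by
  ext σ
  constructor
  · rintro ⟨⟨hσ, h₀⟩, h₁ : σ 0 ≠ 1⟩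
    rcases hσ.eq_liftPerm_or with ⟨τ, -, rfl⟩ | ⟨τ, -, rfl⟩ | ⟨τ, hτ, hτ₀, rfl⟩
    · simp at h₀
    · simp at h₁
    · exact ⟨τ, ⟨hτ, hτ₀⟩, rfl⟩
  · rintro ⟨τ, ⟨hτ, hτ₀⟩, rfl⟩
    exact ⟨⟨hτ.liftPerm_mul_swap, by simp⟩, by simp [hτ₀]⟩

lemma ncard_setOf_apply_zero_eq_zero :
    {σ : Perm (Fin (n + 2)) | IsProdOfDistinctSimpleTranspositions σ ∧ σ 0 = 0}.ncard =
      {τ : Perm (Fin (n + 1)) | IsProdOfDistinctSimpleTranspositions τ}.ncard := by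
  rw [setOf_apply_zero_eq_zero, Set.ncard_image_of_injective _ liftPerm_injective]

lemma ncard_setOf_apply_zero_ne_zero :
    {σ : Perm (Fin (n + 2)) | IsProdOfDistinctSimpleTranspositions σ ∧ σ 0 ≠ 0}.ncard =
      {τ : Perm (Fin (n + 1)) | IsProdOfDistinctSimpleTranspositions τ}.ncard +
      {τ : Perm (Fin (n + 1)) | IsProdOfDistinctSimpleTranspositions τ ∧ τ 0 ≠ 0}.ncard := by
  rw [← Set.ncard_inter_add_ncard_sdiff_eq_ncard _ {σ | σ 0 = 1}, setOf_apply_zero_eq_one,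
    setOf_apply_zero_ne_zero_ne_one,
    Set.ncard_image_of_injective _ fun _ _ h => liftPerm_injective (mul_left_cancel h),
    Set.ncard_image_of_injective _ fun _ _ h => liftPerm_injective (mul_right_cancel h)]

lemma ncard_setOf_succ_succ :
    {σ : Perm (Fin (n + 2)) | IsProdOfDistinctSimpleTranspositions σ}.ncard =
      {τ : Perm (Fin (n + 1)) | IsProdOfDistinctSimpleTranspositions τ}.ncard +
      {σ : Perm (Fin (n + 2)) | IsProdOfDistinctSimpleTranspositions σ ∧ σ 0 ≠ 0}.ncard := by
  rw [← Set.ncard_inter_add_ncard_sdiff_eq_ncard _ {σ | σ 0 = 0}, ← ncard_setOf_apply_zero_eq_zero]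
  rfl

end Counting

lemma ncard_setOf_eq_fib (m : ℕ) :
    {σ : Perm (Fin (m + 1)) | IsProdOfDistinctSimpleTranspositions σ}.ncard = Nat.fib (2 * m + 1) ∧
    {σ : Perm (Fin (m + 1)) | IsProdOfDistinctSimpleTranspositions σ ∧ σ 0 ≠ 0}.ncard =
      Nat.fib (2 * m) := by
  induction m with
  | zero =>
    refine ⟨Set.ncard_eq_one.2 ⟨1, ?_⟩, by simp [Subsingleton.elim _ (0 : Fin 1)]⟩
    exact Set.eq_singleton_iff_unique_mem.2 ⟨⟨[], List.nodup_nil, by simp, rfl⟩,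
      fun _ _ => Equiv.ext fun _ => Subsingleton.elim (α := Fin 1) _ _⟩
  | succ m ih =>
    have h₀ : {σ : Perm (Fin (m + 2)) | IsProdOfDistinctSimpleTranspositions σ ∧ σ 0 ≠ 0}.ncard =
        Nat.fib (2 * (m + 1)) := by
      rw [ncard_setOf_apply_zero_ne_zero, ih.1, ih.2, Nat.mul_succ, Nat.fib_add_two, add_comm]
    refine ⟨?_, h₀⟩
    rw [ncard_setOf_succ_succ, ih.1, h₀, show 2 * (m + 1) + 1 = 2 * m + 1 + 2 by ring,
      Nat.fib_add_two]
    rfl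

/-- The number of permutations of {1,…,n} that are products of pairwise distinct
simple transpositions equals F_{2n}, i.e. (with Mathlib's convention) fib (2n-1). -/
theorem card_prodDistinctSimpleTranspositions (n : ℕ) (hn : 1 ≤ n) :
    Nat.card {σ : Equiv.Perm (Fin n) // IsProdOfDistinctSimpleTranspositions σ}
      = Nat.fib (2 * n - 1) := by
  obtain ⟨m, rfl⟩ := Nat.exists_eq_add_of_le' hn
  rw [show 2 * (m + 1) - 1 = 2 * m + 1 by omega]
  exact (ncard_setOf_eq_fib m).1
end
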